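/- In QHC, ⊢ (¬¬α ↔ ∇α) ↔ (¬!¬?α → !?α): the problem ∇α coincides with ¬¬α exactly when the proposition ?α is stable (strong internalized form). -/

import Mathlib

/- Problem (intuitionistic) formulas and proposition (classical) formulas of QHC. -/
mutual
inductive PF : Type
  | var : Nat → PF
  | bot : PF
  | and : PF → PF → PF
  | or : PF → PF → PF
  | imp : PF → PF → PF
  | bang : CF → PF
inductive CF : Type
  | var : Nat → CF
  | fls : CF
  | and : CF → CF → CF
  | or : CF → CF → CF
  | imp : CF → CF → CF
  | quest : PF → CF
end

def PF.neg (α : PF) : PF := α.imp PF.bot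
def CF.neg (p : CF) : CF := p.imp CF.fls
def PF.iff (α β : PF) : PF := (α.imp β).and (β.imp α)
def CF.iff (p q : CF) : CF := (p.imp q).and (q.imp p)
def CF.box (p : CF) : CF := CF.quest (PF.bang p)
def PF.nabla (α : PF) : PF := PF.bang (CF.quest α)

/- Derivability in QHC, parameterized by a set `Ax` of extra problem axioms
(used to treat the axiom ¬!0 and its variants uniformly). Intuitionistic logic
on problems, classical logic on propositions, the rules α ⊢ ?α and p ⊢ !p, and
the mixed axioms ?!p → p, α → !?α, !(p→q) → (!p → !q), ?(α→β) → (?α → ?β). -/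
mutual
inductive ProvP (Ax : PF → Prop) : PF → Prop
  | axm {α} : Ax α → ProvP Ax α
  | mp {α β} : ProvP Ax (α.imp β) → ProvP Ax α → ProvP Ax β
  | ak (α β : PF) : ProvP Ax (α.imp (β.imp α))
  | as (α β γ : PF) : ProvP Ax ((α.imp (β.imp γ)).imp ((α.imp β).imp (α.imp γ)))
  | andI (α β : PF) : ProvP Ax (α.imp (β.imp (α.and β)))
  | andE1 (α β : PF) : ProvP Ax ((α.and β).imp α)
  | andE2 (α β : PF) : ProvP Ax ((α.and β).imp β)
  | orI1 (α β : PF) : ProvP Ax (α.imp (α.or β))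
  | orI2 (α β : PF) : ProvP Ax (β.imp (α.or β))
  | orE (α β γ : PF) : ProvP Ax ((α.imp γ).imp ((β.imp γ).imp ((α.or β).imp γ)))
  | exf (α : PF) : ProvP Ax (PF.bot.imp α)
  | bangIntro {p} : ProvC Ax p → ProvP Ax (PF.bang p)
  | bangImp (p q : CF) : ProvP Ax ((PF.bang (p.imp q)).imp ((PF.bang p).imp (PF.bang q)))
  | bangQuest (α : PF) : ProvP Ax (α.imp (PF.bang (CF.quest α)))
inductive ProvC (Ax : PF → Prop) : CF → Prop
  | mp {p q} : ProvC Ax (p.imp q) → ProvC Ax p → ProvC Ax q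
  | ak (p q : CF) : ProvC Ax (p.imp (q.imp p))
  | as (p q r : CF) : ProvC Ax ((p.imp (q.imp r)).imp ((p.imp q).imp (p.imp r)))
  | andI (p q : CF) : ProvC Ax (p.imp (q.imp (p.and q)))
  | andE1 (p q : CF) : ProvC Ax ((p.and q).imp p)
  | andE2 (p q : CF) : ProvC Ax ((p.and q).imp q)
  | orI1 (p q : CF) : ProvC Ax (p.imp (p.or q))
  | orI2 (p q : CF) : ProvC Ax (q.imp (p.or q))
  | orE (p q r : CF) : ProvC Ax ((p.imp r).imp ((q.imp r).imp ((p.or q).imp r)))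
  | exf (p : CF) : ProvC Ax (CF.fls.imp p)
  | lem (p : CF) : ProvC Ax (p.or (p.imp CF.fls))
  | questIntro {α} : ProvP Ax α → ProvC Ax (CF.quest α)
  | questImp (α β : PF) : ProvC Ax ((CF.quest (α.imp β)).imp ((CF.quest α).imp (CF.quest β)))
  | questBang (p : CF) : ProvC Ax ((CF.quest (PF.bang p)).imp p)
end

/-- The axiom (!⊥): ¬!0. -/
def QHCAx : PF → Prop := fun α => α = (PF.bang CF.fls).imp PF.bot

/-- Derivability of a problem in QHC. -/
def PrvP (α : PF) : Prop := ProvP QHCAx α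
/-- Derivability of a proposition in QHC. -/
def PrvC (p : CF) : Prop := ProvC QHCAx p

/-! Under `¬!0` a problem is refuted exactly when its proposition is refuted inside `!`:
`¬α ↔ !¬?α`. Forwards, `?¬α` gives `?α → ?⊥`, and `?⊥ → ?!0 → 0`; backwards, `α → !?α` together
with `!(?α → 0)` yields `!0`. Negating both sides, `¬¬α ↔ ¬!¬?α`. Since moreover `∇α → ¬¬α`
(from `¬α` we get `!¬?α`, which with `!?α` yields `!0`), the equivalence `¬¬α ↔ ∇α` reduces to
`¬¬α → ∇α`, that is, to `¬!¬?α → ∇α`. -/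

section

variable {Ax Ax' : PF → Prop}

def addHyp (Ax : PF → Prop) (γ : PF) : PF → Prop := fun β => Ax β ∨ β = γ

theorem ProvP.imp_intro {α β : PF} (h : ProvP Ax α) : ProvP Ax (β.imp α) := (ProvP.ak α β).mp h

theorem ProvC.imp_intro {p q : CF} (h : ProvC Ax p) : ProvC Ax (q.imp p) := (ProvC.ak p q).mp h

theorem ProvP.imp_mp {γ α β : PF} (h : ProvP Ax (γ.imp (α.imp β))) (h' : ProvP Ax (γ.imp α)) :
    ProvP Ax (γ.imp β) := ((ProvP.as γ α β).mp h).mp h'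

theorem ProvC.imp_mp {r p q : CF} (h : ProvC Ax (r.imp (p.imp q))) (h' : ProvC Ax (r.imp p)) :
    ProvC Ax (r.imp q) := ((ProvC.as r p q).mp h).mp h'

theorem ProvP.imp_trans {α β γ : PF} (h : ProvP Ax (α.imp β)) (h' : ProvP Ax (β.imp γ)) :
    ProvP Ax (α.imp γ) := h'.imp_intro.imp_mp h

theorem ProvC.imp_trans {p q r : CF} (h : ProvC Ax (p.imp q)) (h' : ProvC Ax (q.imp r)) :
    ProvC Ax (p.imp r) := h'.imp_intro.imp_mp h

theorem ProvP.imp_self (α : PF) : ProvP Ax (α.imp α) :=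
  (ProvP.ak α (α.imp α)).imp_mp (ProvP.ak α α)

mutual
theorem ProvP.imp_of_axioms_imp {γ : PF} (hAx : ∀ {φ}, Ax φ → ProvP Ax' (γ.imp φ)) :
    ∀ {α : PF}, ProvP Ax α → ProvP Ax' (γ.imp α)
  | _, .axm h => hAx h
  | _, .mp d e => (d.imp_of_axioms_imp hAx).imp_mp (e.imp_of_axioms_imp hAx)
  | _, .bangIntro d =>
    (ProvP.bangQuest γ).imp_trans ((ProvP.bangImp _ _).mp (.bangIntro (d.imp_of_axioms_imp hAx)))
  | _, .ak .. => (ProvP.ak ..).imp_intro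
  | _, .as .. => (ProvP.as ..).imp_intro
  | _, .andI .. => (ProvP.andI ..).imp_intro
  | _, .andE1 .. => (ProvP.andE1 ..).imp_intro
  | _, .andE2 .. => (ProvP.andE2 ..).imp_intro
  | _, .orI1 .. => (ProvP.orI1 ..).imp_intro
  | _, .orI2 .. => (ProvP.orI2 ..).imp_intro
  | _, .orE .. => (ProvP.orE ..).imp_intro
  | _, .exf .. => (ProvP.exf ..).imp_intro
  | _, .bangImp .. => (ProvP.bangImp ..).imp_intro
  | _, .bangQuest .. => (ProvP.bangQuest ..).imp_intro
theorem ProvC.imp_of_axioms_imp {γ : PF} (hAx : ∀ {φ}, Ax φ → ProvP Ax' (γ.imp φ)) :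
    ∀ {p : CF}, ProvC Ax p → ProvC Ax' ((CF.quest γ).imp p)
  | _, .mp d e => (d.imp_of_axioms_imp hAx).imp_mp (e.imp_of_axioms_imp hAx)
  | _, .questIntro d => (ProvC.questImp _ _).mp (.questIntro (d.imp_of_axioms_imp hAx))
  | _, .ak .. => (ProvC.ak ..).imp_intro
  | _, .as .. => (ProvC.as ..).imp_intro
  | _, .andI .. => (ProvC.andI ..).imp_intro
  | _, .andE1 .. => (ProvC.andE1 ..).imp_intro
  | _, .andE2 .. => (ProvC.andE2 ..).imp_intro
  | _, .orI1 .. => (ProvC.orI1 ..).imp_intro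
  | _, .orI2 .. => (ProvC.orI2 ..).imp_intro
  | _, .orE .. => (ProvC.orE ..).imp_intro
  | _, .exf .. => (ProvC.exf ..).imp_intro
  | _, .lem .. => (ProvC.lem ..).imp_intro
  | _, .questImp .. => (ProvC.questImp ..).imp_intro
  | _, .questBang .. => (ProvC.questBang ..).imp_intro
end

theorem ProvP.hyp {γ : PF} : ProvP (addHyp Ax γ) γ := .axm (.inr rfl)

theorem ProvP.deduction {γ α : PF} (h : ProvP (addHyp Ax γ) α) : ProvP Ax (γ.imp α) :=
  h.imp_of_axioms_imp fun
    | .inl hφ => (ProvP.axm hφ).imp_intro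
    | .inr rfl => ProvP.imp_self _

theorem ProvP.weaken {γ α : PF} (h : ProvP Ax α) : ProvP (addHyp Ax γ) α :=
  (h.imp_of_axioms_imp fun hφ => (ProvP.axm (.inl hφ)).imp_intro).mp .hyp

theorem ProvP.iff_intro {α β : PF} (h : ProvP Ax (α.imp β)) (h' : ProvP Ax (β.imp α)) :
    ProvP Ax (α.iff β) := ((ProvP.andI _ _).mp h).mp h'

theorem ProvP.iff_mp {α β : PF} (h : ProvP Ax (α.iff β)) : ProvP Ax (α.imp β) :=
  (ProvP.andE1 _ _).mp h

theorem ProvP.contrapose {α β : PF} (h : ProvP Ax (α.imp β)) : ProvP Ax (β.neg.imp α.neg) :=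
  .deduction (h.weaken.imp_trans .hyp)

theorem ProvC.quest_bot_imp_fls : ProvC Ax ((CF.quest PF.bot).imp CF.fls) :=
  ((ProvC.questImp _ _).mp (.questIntro (ProvP.exf (PF.bang CF.fls)))).imp_trans (.questBang _)

theorem ProvP.neg_imp_bang_neg_quest (α : PF) :
    ProvP Ax (α.neg.imp (PF.bang (CF.quest α).neg)) :=
  .deduction (.bangIntro (((ProvC.questImp _ _).mp (.questIntro .hyp)).imp_trans
    ProvC.quest_bot_imp_fls))

theorem ProvP.bang_neg_quest_imp_neg (hb : ProvP Ax (PF.bang CF.fls).neg) (α : PF) :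
    ProvP Ax ((PF.bang (CF.quest α).neg).imp α.neg) :=
  .deduction ((ProvP.bangQuest α).imp_trans (((ProvP.bangImp _ _).mp .hyp).imp_trans hb.weaken))

theorem ProvP.nabla_imp_neg_neg (hb : ProvP Ax (PF.bang CF.fls).neg) (α : PF) :
    ProvP Ax (α.nabla.imp α.neg.neg) :=
  .deduction (.deduction (hb.weaken.weaken.mp
    (((ProvP.bangImp _ _).mp ((neg_imp_bang_neg_quest α).mp .hyp)).mp ProvP.hyp.weaken)))

end

theorem qhc_nabla_eq_negneg_iff_stable (α : PF) :
    PrvP (PF.iff (PF.iff (PF.neg (PF.neg α)) (PF.nabla α))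
      ((PF.neg (PF.bang (CF.neg (CF.quest α)))).imp (PF.bang (CF.quest α)))) := by
  have hb : PrvP (PF.bang CF.fls).neg := .axm rfl
  have neg_neg_imp : PrvP (α.neg.neg.imp (PF.bang (CF.quest α).neg).neg) :=
    (ProvP.bang_neg_quest_imp_neg hb α).contrapose
  have imp_neg_neg : PrvP ((PF.bang (CF.quest α).neg).neg.imp α.neg.neg) :=
    (ProvP.neg_imp_bang_neg_quest α).contrapose
  refine .iff_intro (.deduction ?_) (.deduction ?_)
  · exact imp_neg_neg.weaken.imp_trans ProvP.hyp.iff_mp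
  · exact .iff_intro (neg_neg_imp.weaken.imp_trans .hyp) (.nabla_imp_neg_neg hb.weaken α)
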